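/- arXiv:1905.13285 — 3 statements merged into one kernel-verified Lean document; each statement's English description precedes it below -/
import Mathlib

section
/- Let U : ℝ^d → ℝ be (L,α)-weakly smooth. Then for every δ > 0, setting M = (1/δ)^{(1−α)/(1+α)} · L^{2/(1+α)}, one has for all x, y ∈ ℝ^d: U(y) ≤ U(x) + ⟨∇U(x), y − x⟩ + (M/2)·‖y − x‖₂² + δ/2. -/
open MeasureTheory Real
open scoped InnerProductSpace ENNReal


lemma scalar_ineq (L α δ r : ℝ) (hL : 0 ≤ L) (hα0 : 0 ≤ α) (hα1 : α ≤ 1)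
    (hδ : 0 < δ) (hr : 0 ≤ r) :
    L / (1 + α) * r ^ (1 + α) ≤
      ((1 / δ) ^ ((1 - α) / (1 + α)) * L ^ (2 / (1 + α))) / 2 * r ^ (2:ℝ) + δ / 2 := by
  have h1α : (0:ℝ) < 1 + α := by linarith
  set MM := (1 / δ) ^ ((1 - α) / (1 + α)) * L ^ (2 / (1 + α)) with hMM
  have hM0 : 0 ≤ MM :=
    mul_nonneg (Real.rpow_nonneg (by positivity) _) (Real.rpow_nonneg hL _)
  rcases eq_or_lt_of_le hα1 with rfl | hα1'
  · -- α = 1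
    have hM : MM = L := by
      rw [hMM]
      norm_num
    rw [hM]
    have h2 : (1:ℝ) + 1 = 2 := by norm_num
    rw [h2]
    nlinarith [Real.rpow_nonneg hr 2]
  · -- α < 1
    have h1mα : (0:ℝ) < 1 - α := by linarith
    set p := 2 / (1 + α) with hp
    set q := 2 / (1 - α) with hq
    have hpq : p.HolderConjugate q := by
      rw [Real.holderConjugate_iff]
      constructor
      · rw [hp, lt_div_iff₀ h1α]; linarith
      · rw [hp, hq]; field_simp; ring
    set a := δ ^ (-((1 - α) / 2)) * L * r ^ (1 + α) with ha
    set b := δ ^ ((1 - α) / 2) with hb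
    have ha0 : 0 ≤ a :=
      mul_nonneg (mul_nonneg (Real.rpow_nonneg hδ.le _) hL) (Real.rpow_nonneg hr _)
    have hb0 : 0 ≤ b := Real.rpow_nonneg hδ.le _
    have hab : a * b = L * r ^ (1 + α) := by
      rw [ha, hb]
      have e : δ ^ (-((1 - α) / 2)) * L * r ^ (1 + α) * δ ^ ((1 - α) / 2)
          = (δ ^ (-((1 - α) / 2)) * δ ^ ((1 - α) / 2)) * (L * r ^ (1 + α)) := by ring
      rw [e, ← Real.rpow_add hδ]
      simp
    have hap : a ^ p = MM * r ^ (2:ℝ) := by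
      rw [ha, Real.mul_rpow (mul_nonneg (Real.rpow_nonneg hδ.le _) hL) (Real.rpow_nonneg hr _),
        Real.mul_rpow (Real.rpow_nonneg hδ.le _) hL,
        ← Real.rpow_mul hδ.le, ← Real.rpow_mul hr, hMM]
      congr 2
      · rw [one_div, Real.inv_rpow hδ.le, ← Real.rpow_neg hδ.le]
        congr 1
        rw [hp]
        field_simp
      · rw [hp]
        field_simp
    have hbq : b ^ q = δ := by
      rw [hb, ← Real.rpow_mul hδ.le]
      rw [hq]
      have : (1 - α) / 2 * (2 / (1 - α)) = 1 := by field_simp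
      rw [this, Real.rpow_one]
    have key := Real.young_inequality_of_nonneg ha0 hb0 hpq
    rw [hab, hap, hbq] at key
    have key2 : L * r ^ (1 + α) ≤ MM * r ^ (2:ℝ) * ((1 + α) / 2) + δ * ((1 - α) / 2) := by
      calc L * r ^ (1 + α) ≤ MM * r ^ (2:ℝ) / p + δ / q := key
        _ = MM * r ^ (2:ℝ) * ((1 + α) / 2) + δ * ((1 - α) / 2) := by
            rw [hp, hq]; field_simp
    rw [div_mul_eq_mul_div, div_le_iff₀ h1α]
    nlinarith [Real.rpow_nonneg hr (2:ℝ)]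


lemma descent_lemma {d : ℕ}
    (U : EuclideanSpace ℝ (Fin d) → ℝ)
    (gU : EuclideanSpace ℝ (Fin d) → EuclideanSpace ℝ (Fin d))
    (L α : ℝ) (hL : 0 ≤ L) (hα0 : 0 ≤ α) (hα1 : α ≤ 1)
    (hconv : ∀ x y, U x + ⟪gU x, y - x⟫_ℝ ≤ U y)
    (hHolder : ∀ x y, ‖gU x - gU y‖ ≤ L * ‖x - y‖ ^ α)
    (x y : EuclideanSpace ℝ (Fin d)) :
    U y ≤ U x + ⟪gU x, y - x⟫_ℝ + L / (1 + α) * ‖y - x‖ ^ (1 + α) := by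
  have h1α : (0:ℝ) < 1 + α := by linarith
  set v := y - x with hv
  rcases eq_or_lt_of_le hα0 with rfl | hα0'
  · -- α = 0 : simple two-point bound
    have h1 := hconv x y
    have h2 := hconv y x
    have e : x - y = -(y - x) := by abel
    rw [e, inner_neg_right] at h2
    have h3 : ⟪gU y - gU x, y - x⟫_ℝ ≤ ‖gU y - gU x‖ * ‖y - x‖ := real_inner_le_norm _ _
    have h4 : ‖gU y - gU x‖ ≤ L * ‖y - x‖ ^ (0:ℝ) := hHolder y x
    rw [Real.rpow_zero, mul_one] at h4
    have h5 : ⟪gU y - gU x, y - x⟫_ℝ = ⟪gU y, y - x⟫_ℝ - ⟪gU x, y - x⟫_ℝ :=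
      inner_sub_left _ _ _
    have h6 : L / (1 + 0) * ‖y - x‖ ^ ((1:ℝ) + 0) = L * ‖y - x‖ := by
      norm_num
    rw [← hv] at *
    rw [h6]
    nlinarith [norm_nonneg v, mul_le_mul_of_nonneg_right h4 (norm_nonneg v)]
  · -- α > 0 : integral argument
    set φ : ℝ → ℝ := fun t => U (x + t • v) with hφ
    set ψ : ℝ → ℝ := fun t => ⟪gU (x + t • v), v⟫_ℝ with hψ
    have hpt : ∀ s t : ℝ, (x + t • v) - (x + s • v) = (t - s) • v := by
      intro s t; rw [sub_smul]; abel
    have hφψ : ∀ s t : ℝ, φ s + (t - s) * ψ s ≤ φ t := by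
      intro s t
      have := hconv (x + s • v) (x + t • v)
      rwa [hpt s t, real_inner_smul_right] at this
    have h2 : ∀ s t : ℝ, |ψ t - ψ s| ≤ L * ‖v‖ ^ (1 + α) * |t - s| ^ α := by
      intro s t
      have e1 : ψ t - ψ s = ⟪gU (x + t • v) - gU (x + s • v), v⟫_ℝ :=
        (inner_sub_left _ _ _).symm
      rw [e1]
      calc |⟪gU (x + t • v) - gU (x + s • v), v⟫_ℝ|
          ≤ ‖gU (x + t • v) - gU (x + s • v)‖ * ‖v‖ := abs_real_inner_le_norm _ _
        _ ≤ (L * ‖(x + t • v) - (x + s • v)‖ ^ α) * ‖v‖ :=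
            mul_le_mul_of_nonneg_right (hHolder _ _) (norm_nonneg v)
        _ = L * ‖v‖ ^ (1 + α) * |t - s| ^ α := by
            rw [hpt s t, norm_smul, Real.norm_eq_abs,
              Real.mul_rpow (abs_nonneg _) (norm_nonneg _),
              Real.rpow_add' (norm_nonneg v) (by positivity : (1:ℝ) + α ≠ 0),
              Real.rpow_one]
            ring
    have htend : ∀ t : ℝ, Filter.Tendsto (fun u => L * ‖v‖ ^ (1 + α) * |u - t| ^ α)
        (nhds t) (nhds 0) := by
      intro t
      have h1 : Filter.Tendsto (fun u : ℝ => |u - t|) (nhds t) (nhds 0) := by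
        have := ((continuous_id.sub (continuous_const : Continuous fun _ : ℝ => t)).abs).tendsto t
        simpa using this
      have h2' : Filter.Tendsto (fun u : ℝ => |u - t| ^ α) (nhds t) (nhds 0) := by
        have hc : Filter.Tendsto (fun s : ℝ => s ^ α) (nhds 0) (nhds ((0:ℝ) ^ α)) :=
          (Real.continuousAt_rpow_const 0 α (Or.inr hα0'.le)).tendsto
        rw [Real.zero_rpow hα0'.ne'] at hc
        exact hc.comp h1
      simpa using h2'.const_mul (L * ‖v‖ ^ (1 + α))
    have hψcont : Continuous ψ := by
      rw [continuous_iff_continuousAt]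
      intro t
      rw [ContinuousAt, ← tendsto_sub_nhds_zero_iff]
      apply squeeze_zero_norm (fun u => ?_) (htend t)
      rw [Real.norm_eq_abs]
      exact h2 t u
    have hψderiv : ∀ t : ℝ, HasDerivAt φ (ψ t) t := by
      intro t
      rw [hasDerivAt_iff_tendsto_slope]
      rw [← tendsto_sub_nhds_zero_iff]
      apply squeeze_zero_norm' ?_ ((htend t).mono_left nhdsWithin_le_nhds)
      filter_upwards [self_mem_nhdsWithin] with u (hu : u ≠ t)
      rw [Real.norm_eq_abs]
      have hb1 : φ t + (u - t) * ψ t ≤ φ u := hφψ t u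
      have hb2 : φ u + (t - u) * ψ u ≤ φ t := hφψ u t
      have habs := h2 t u
      have hslope : slope φ t u = (φ u - φ t) / (u - t) := slope_def_field φ t u
      have hb : |slope φ t u - ψ t| ≤ |ψ u - ψ t| := by
        have A : -|ψ u - ψ t| ≤ ψ u - ψ t := neg_abs_le _
        have B : ψ u - ψ t ≤ |ψ u - ψ t| := le_abs_self _
        have C : 0 ≤ |ψ u - ψ t| := abs_nonneg _
        rcases lt_or_gt_of_ne hu with hlt | hgt
        · -- u < t
          have hut : u - t < 0 := by linarith
          have e1 : slope φ t u ≤ ψ t := by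
            rw [hslope, div_le_iff_of_neg hut]; linarith
          have e2 : ψ u ≤ slope φ t u := by
            rw [hslope, le_div_iff_of_neg hut]; nlinarith
          rw [abs_le]
          constructor <;> linarith
        · -- u > t
          have hut : 0 < u - t := by linarith
          have e1 : ψ t ≤ slope φ t u := by
            rw [hslope, le_div_iff₀ hut]; linarith
          have e2 : slope φ t u ≤ ψ u := by
            rw [hslope, div_le_iff₀ hut]; nlinarith
          rw [abs_le]
          constructor <;> linarith
      exact hb.trans habs
    have hrpowc : Continuous fun t : ℝ => t ^ α :=
      continuous_iff_continuousAt.2 fun z => Real.continuousAt_rpow_const z α (Or.inr hα0'.le)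
    have hFTC : ∫ t in (0:ℝ)..1, ψ t = φ 1 - φ 0 :=
      intervalIntegral.integral_eq_sub_of_hasDerivAt (fun t _ => hψderiv t)
        (hψcont.intervalIntegrable 0 1)
    have hintcont : Continuous fun t : ℝ => ψ 0 + L * ‖v‖ ^ (1 + α) * t ^ α :=
      continuous_const.add (continuous_const.mul hrpowc)
    have hmono : ∫ t in (0:ℝ)..1, ψ t ≤
        ∫ t in (0:ℝ)..1, (ψ 0 + L * ‖v‖ ^ (1 + α) * t ^ α) := by
      apply intervalIntegral.integral_mono_on (by norm_num)
        (hψcont.intervalIntegrable 0 1) (hintcont.intervalIntegrable 0 1)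
      intro t ht
      have := h2 0 t
      rw [sub_zero, abs_of_nonneg ht.1] at this
      have h3 : ψ t - ψ 0 ≤ |ψ t - ψ 0| := le_abs_self _
      linarith
    have hval : ∫ t in (0:ℝ)..1, (ψ 0 + L * ‖v‖ ^ (1 + α) * t ^ α)
        = ψ 0 + L * ‖v‖ ^ (1 + α) * (1 / (α + 1)) := by
      rw [intervalIntegral.integral_add (intervalIntegrable_const)
        (show IntervalIntegrable (fun t : ℝ => L * ‖v‖ ^ (1 + α) * t ^ α) volume 0 1 by
          exact (continuous_const.mul hrpowc).intervalIntegrable 0 1),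
        intervalIntegral.integral_const,
        intervalIntegral.integral_const_mul,
        integral_rpow (Or.inl (by linarith : (-1:ℝ) < α))]
      rw [Real.one_rpow, Real.zero_rpow (by positivity : α + 1 ≠ 0)]
      norm_num
    have hφ1 : φ 1 = U y := by
      rw [hφ]; simp [hv]
    have hφ0 : φ 0 = U x := by
      rw [hφ]; simp
    have hψ0 : ψ 0 = ⟪gU x, v⟫_ℝ := by
      rw [hψ]; simp
    have hfin : L * ‖v‖ ^ (1 + α) * (1 / (α + 1)) = L / (1 + α) * ‖v‖ ^ (1 + α) := by
      rw [add_comm α 1]; field_simp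
    rw [hFTC] at hmono
    rw [hval, hfin] at hmono
    rw [hφ1, hφ0, hψ0] at hmono
    linarith


/-- If `U` is `(L, α)`-weakly smooth, then for every `δ > 0`, with
`M = (1/δ) ^ ((1-α)/(1+α)) * L ^ (2/(1+α))`, for all `x, y`:
`U y ≤ U x + ⟪gU x, y - x⟫ + (M/2) * ‖y - x‖² + δ/2`. -/
theorem weakly_smooth_inexact_smooth_model {d : ℕ}
    (U : EuclideanSpace ℝ (Fin d) → ℝ)
    (gU : EuclideanSpace ℝ (Fin d) → EuclideanSpace ℝ (Fin d))
    (L α : ℝ) (hL : 0 ≤ L) (hα0 : 0 ≤ α) (hα1 : α ≤ 1)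
    (hconv : ∀ x y, U x + ⟪gU x, y - x⟫_ℝ ≤ U y)
    (hHolder : ∀ x y, ‖gU x - gU y‖ ≤ L * ‖x - y‖ ^ α) :
    ∀ δ : ℝ, 0 < δ → ∀ M : ℝ, M = (1 / δ) ^ ((1 - α) / (1 + α)) * L ^ (2 / (1 + α)) →
      ∀ x y, U y ≤ U x + ⟪gU x, y - x⟫_ℝ + M / 2 * ‖y - x‖ ^ 2 + δ / 2 := by
  intro δ hδ M hM x y
  have hd := descent_lemma U gU L α hL hα0 hα1 hconv hHolder x y
  have hs := scalar_ineq L α δ ‖y - x‖ hL hα0 hα1 hδ (norm_nonneg _)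
  rw [show ((2:ℝ)) = ((2:ℕ):ℝ) by norm_num, Real.rpow_natCast] at hs
  rw [hM]
  have : ((1 / δ) ^ ((1 - α) / (1 + α)) * L ^ (2 / (1 + α))) / 2 * ‖y - x‖ ^ (2:ℕ)
      = (1 / δ) ^ ((1 - α) / (1 + α)) * L ^ (2 / (1 + α)) / 2 * ‖y - x‖ ^ 2 := rfl
  linarith
end

section
/- Let U : ℝ^d → ℝ be convex with a selection of subgradients ∇U, and suppose that for some M > 0 and δ ≥ 0 it satisfies U(y) ≤ U(x) + ⟨∇U(x), y − x⟩ + (M/2)·‖y − x‖₂² + δ/2 for all x, y ∈ ℝ^d. Then for all x, y ∈ ℝ^d: ‖∇U(x) − ∇U(y)‖₂ ≤ M‖x − y‖₂ + 2·√(δM). -/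
open MeasureTheory Real
open scoped InnerProductSpace ENNReal

lemma inexact_key {d : ℕ}
    (U : EuclideanSpace ℝ (Fin d) → ℝ)
    (gU : EuclideanSpace ℝ (Fin d) → EuclideanSpace ℝ (Fin d))
    (M δ : ℝ) (hM : 0 < M)
    (hconv : ∀ x y, U x + ⟪gU x, y - x⟫_ℝ ≤ U y)
    (hupper : ∀ x y, U y ≤ U x + ⟪gU x, y - x⟫_ℝ + M / 2 * ‖y - x‖ ^ 2 + δ / 2)
    (x y : EuclideanSpace ℝ (Fin d)) :
    ‖gU x - gU y‖ ^ 2 ≤ 2 * M * (U y - U x - ⟪gU x, y - x⟫_ℝ) + M * δ := by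
  set v := gU y - gU x with hv
  set z := y - M⁻¹ • v with hz
  have h1 := hconv x z
  have h2 := hupper y z
  have hzx : z - x = (y - x) - M⁻¹ • v := by rw [hz]; abel
  have hzy : z - y = -(M⁻¹ • v) := by rw [hz]; abel
  have e1 : ⟪gU x, z - x⟫_ℝ = ⟪gU x, y - x⟫_ℝ - M⁻¹ * ⟪gU x, v⟫_ℝ := by
    rw [hzx, inner_sub_right, real_inner_smul_right]
  have e3 : ‖z - y‖ ^ 2 = M⁻¹ ^ 2 * ‖v‖ ^ 2 := by
    rw [hzy, norm_neg, norm_smul, Real.norm_eq_abs,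
      abs_of_pos (inv_pos.mpr hM), mul_pow]
  have e2 : ⟪gU y, z - y⟫_ℝ = -(M⁻¹ * ⟪gU y, v⟫_ℝ) := by
    rw [hzy, inner_neg_right, real_inner_smul_right]
  have e4 : ⟪gU y, v⟫_ℝ - ⟪gU x, v⟫_ℝ = ‖v‖ ^ 2 := by
    rw [← inner_sub_left, ← hv, real_inner_self_eq_norm_sq]
  have hnorm : ‖gU x - gU y‖ = ‖v‖ := by rw [hv, norm_sub_rev]
  have hMM : M * M⁻¹ = 1 := mul_inv_cancel₀ (ne_of_gt hM)
  rw [hnorm]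
  rw [e1] at h1
  rw [e2, e3] at h2
  have e5 : M⁻¹ * ⟪gU y, v⟫_ℝ - M⁻¹ * ⟪gU x, v⟫_ℝ = M⁻¹ * ‖v‖ ^ 2 := by
    rw [← mul_sub, e4]
  have h3 : M⁻¹ * ‖v‖ ^ 2 ≤
      (U y - U x - ⟪gU x, y - x⟫_ℝ) + M / 2 * (M⁻¹ ^ 2 * ‖v‖ ^ 2) + δ / 2 := by
    linarith [h1, h2, e5]
  have h4 := mul_le_mul_of_nonneg_left h3 hM.le
  have hMne : M ≠ 0 := ne_of_gt hM
  have eL : M * (M⁻¹ * ‖v‖ ^ 2) = ‖v‖ ^ 2 := by field_simp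
  have eR : M * ((U y - U x - ⟪gU x, y - x⟫_ℝ) + M / 2 * (M⁻¹ ^ 2 * ‖v‖ ^ 2) + δ / 2)
      = M * (U y - U x - ⟪gU x, y - x⟫_ℝ) + ‖v‖ ^ 2 / 2 + M * δ / 2 := by
    field_simp
  rw [eL, eR] at h4
  linarith

/-- If a convex subdifferentiable `U` satisfies the inexact quadratic upper
model `U y ≤ U x + ⟪gU x, y - x⟫ + (M/2)‖y - x‖² + δ/2` with `M > 0`, `δ ≥ 0`, then its
subgradient selection satisfies `‖gU x - gU y‖ ≤ M ‖x - y‖ + 2 √(δ M)`. -/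
theorem inexact_smooth_model_grad_lipschitz {d : ℕ}
    (U : EuclideanSpace ℝ (Fin d) → ℝ)
    (gU : EuclideanSpace ℝ (Fin d) → EuclideanSpace ℝ (Fin d))
    (M δ : ℝ) (hM : 0 < M) (hδ : 0 ≤ δ)
    (hconv : ∀ x y, U x + ⟪gU x, y - x⟫_ℝ ≤ U y)
    (hupper : ∀ x y, U y ≤ U x + ⟪gU x, y - x⟫_ℝ + M / 2 * ‖y - x‖ ^ 2 + δ / 2) :
    ∀ x y, ‖gU x - gU y‖ ≤ M * ‖x - y‖ + 2 * Real.sqrt (δ * M) := by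
  intro x y
  have k1 := inexact_key U gU M δ hM hconv hupper x y
  have k2 := inexact_key U gU M δ hM hconv hupper y x
  rw [norm_sub_rev] at k2
  have cs : ⟪gU y - gU x, y - x⟫_ℝ ≤ ‖gU x - gU y‖ * ‖x - y‖ := by
    calc ⟪gU y - gU x, y - x⟫_ℝ ≤ ‖gU y - gU x‖ * ‖y - x‖ := real_inner_le_norm _ _
    _ = ‖gU x - gU y‖ * ‖x - y‖ := by rw [norm_sub_rev (gU y), norm_sub_rev y]
  have hsum : ⟪gU y, y - x⟫_ℝ - ⟪gU x, y - x⟫_ℝ = ⟪gU y - gU x, y - x⟫_ℝ := by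
    rw [inner_sub_left]
  have hin : ⟪gU y, x - y⟫_ℝ = -⟪gU y, y - x⟫_ℝ := by
    rw [← inner_neg_right]; congr 1; abel
  set a := ‖gU x - gU y‖ with ha
  set b := ‖x - y‖ with hb
  have hA : a ^ 2 ≤ M * (a * b) + M * δ := by nlinarith [k1, k2, cs, hsum, hin]
  set s := Real.sqrt (δ * M) with hs
  have hs0 : 0 ≤ s := Real.sqrt_nonneg _
  have hs2 : s ^ 2 = δ * M := Real.sq_sqrt (mul_nonneg hδ hM.le)
  have ha0 : 0 ≤ a := norm_nonneg _
  have hb0 : 0 ≤ b := norm_nonneg _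
  have hMb : 0 ≤ M * b := mul_nonneg hM.le hb0
  nlinarith [hA, hs2, mul_nonneg hs0 ha0, mul_nonneg hs0 hs0, mul_nonneg hMb ha0,
    mul_nonneg hMb hs0, sq_nonneg (a - M * b - 2 * s), sq_nonneg (a - 2 * s)]
end

section
/- Let Ū : ℝ^d → ℝ satisfy Ū(x*) = 0, (λ/2)·‖x − x*‖₂² ≤ Ū(x) ≤ ((M+m)/2)·‖x − x*‖₂² + δ/2 for all x ∈ ℝ^d, where 0 < λ ≤ M + m and δ ≥ 0. Let p̄* be the probability measure with density π(x) proportional to exp(−Ū(x)), and let q₀ be the density of the Gaussian N(x*, (M+m)^{−1}·I_d). Then the χ²-divergence satisfies χ²(q₀ | p̄*) = ∫_{ℝ^d} q₀(x)²/π(x) dx ≤ exp(δ/2)·((M+m)/λ)^{d/2}. -/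
open MeasureTheory Real
open scoped InnerProductSpace ENNReal

section Aux

variable {d : ℕ}

private lemma gauss_integrable (b : ℝ) (hb : 0 < b) (xstar : EuclideanSpace ℝ (Fin d)) :
    Integrable (fun x : EuclideanSpace ℝ (Fin d) => Real.exp (-b * ‖x - xstar‖ ^ 2)) := by
  have h : Integrable (fun v : EuclideanSpace ℝ (Fin d) => Real.exp (-b * ‖v‖ ^ 2)) := by
    have hc := GaussianFourier.integrable_cexp_neg_mul_sq_norm_add (V := EuclideanSpace ℝ (Fin d))
      (b := (b : ℂ)) (by simpa using hb) 0 0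
    have := hc.norm
    simpa [Complex.norm_exp, neg_mul, ← Complex.ofReal_pow, ← Complex.ofReal_mul] using this
  exact h.comp_sub_right xstar

private lemma gauss_integral (b : ℝ) (hb : 0 < b) (xstar : EuclideanSpace ℝ (Fin d)) :
    (∫ x : EuclideanSpace ℝ (Fin d), Real.exp (-b * ‖x - xstar‖ ^ 2))
      = (π / b) ^ ((d : ℝ) / 2) := by
  rw [integral_sub_right_eq_self (fun v : EuclideanSpace ℝ (Fin d) => Real.exp (-b * ‖v‖ ^ 2))
    xstar, GaussianFourier.integral_rexp_neg_mul_sq_norm hb]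
  norm_num

private lemma rpow_algebra {a lam : ℝ} {t : ℝ} (ha : 0 < a) (hlam : 0 < lam) :
    ((a / (2 * π)) ^ t) ^ 2 * ((2 * π / lam) ^ t * (2 * π / a) ^ t) = (a / lam) ^ t := by
  have hpi : (0 : ℝ) < π := Real.pi_pos
  rw [sq, ← Real.mul_rpow (by positivity) (by positivity),
    ← Real.mul_rpow (by positivity) (by positivity),
    ← Real.mul_rpow (by positivity) (by positivity)]
  congr 1
  field_simp

end Aux

/-- Suppose `Ū x* = 0` and
`(λ/2)‖x - x*‖² ≤ Ū x ≤ ((M+m)/2)‖x - x*‖² + δ/2` with `0 < λ ≤ M + m`, `δ ≥ 0`. Let `π` be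
the density of the measure `∝ exp (-Ū)` (with normalization `Z = ∫ exp (-Ū)`), and let `q₀`
be the density of `N(x*, (M+m)⁻¹ I_d)`. Then
`χ²(q₀ | p̄*) = ∫ q₀² / π ≤ exp (δ/2) ((M+m)/λ)^{d/2}`. -/
theorem chi_squared_warm_start_bound {d : ℕ}
    (Ub : EuclideanSpace ℝ (Fin d) → ℝ) (lam M m δ Z : ℝ)
    (xstar : EuclideanSpace ℝ (Fin d))
    (hU0 : Ub xstar = 0)
    (hlow : ∀ x, lam / 2 * ‖x - xstar‖ ^ 2 ≤ Ub x)
    (hup : ∀ x, Ub x ≤ (M + m) / 2 * ‖x - xstar‖ ^ 2 + δ / 2)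
    (hlam : 0 < lam) (hle : lam ≤ M + m) (hδ : 0 ≤ δ)
    (hZ : Z = ∫ x, Real.exp (-Ub x)) :
    (∫ x, (((M + m) / (2 * π)) ^ ((d : ℝ) / 2) *
        Real.exp (-(M + m) * ‖x - xstar‖ ^ 2 / 2)) ^ 2 / (Real.exp (-Ub x) / Z)) ≤
      Real.exp (δ / 2) * ((M + m) / lam) ^ ((d : ℝ) / 2) := by
  set a : ℝ := M + m with ha_def
  have ha : 0 < a := lt_of_lt_of_le hlam hle
  have hrhs : 0 ≤ Real.exp (δ / 2) * (a / lam) ^ ((d : ℝ) / 2) := by positivity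
  by_cases hmeas : AEStronglyMeasurable (fun x : EuclideanSpace ℝ (Fin d) =>
      Real.exp (-Ub x)) volume
  · -- measurable case
    set C : ℝ := (a / (2 * π)) ^ ((d : ℝ) / 2) with hC_def
    have hCpos : 0 < C := by
      apply Real.rpow_pos_of_pos
      positivity
    -- integrability of exp(-Ub)
    have hlam2 : (0 : ℝ) < lam / 2 := by linarith
    have ha2 : (0 : ℝ) < a / 2 := by linarith
    have hglam := gauss_integrable (lam / 2) hlam2 xstar
    have hga2 := gauss_integrable (a / 2) ha2 xstar
    have hZint : Integrable (fun x : EuclideanSpace ℝ (Fin d) => Real.exp (-Ub x)) := by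
      refine hglam.mono' hmeas (Filter.Eventually.of_forall fun x => ?_)
      rw [Real.norm_eq_abs, abs_of_pos (Real.exp_pos _)]
      apply Real.exp_le_exp.2
      have := hlow x
      nlinarith
    have hZpos : 0 < Z := by
      rw [hZ]
      have : (fun x : EuclideanSpace ℝ (Fin d) => Real.exp (-Ub x))
          = fun x => Real.exp ((fun y => -Ub y) x) := rfl
      exact integral_exp_pos (by simpa using hZint)
    have hZle : Z ≤ (2 * π / lam) ^ ((d : ℝ) / 2) := by
      have hmono : (∫ x, Real.exp (-Ub x))
          ≤ ∫ x : EuclideanSpace ℝ (Fin d), Real.exp (-(lam / 2) * ‖x - xstar‖ ^ 2) := by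
        refine integral_mono hZint hglam fun x => ?_
        apply Real.exp_le_exp.2
        have := hlow x; nlinarith
      rw [hZ]
      calc (∫ x, Real.exp (-Ub x)) ≤ _ := hmono
        _ = (π / (lam / 2)) ^ ((d : ℝ) / 2) := gauss_integral _ hlam2 xstar
        _ = (2 * π / lam) ^ ((d : ℝ) / 2) := by rw [div_div_eq_mul_div]; ring_nf
    -- pointwise form of the integrand
    have hpt : ∀ x : EuclideanSpace ℝ (Fin d),
        ((C * Real.exp (-a * ‖x - xstar‖ ^ 2 / 2)) ^ 2 / (Real.exp (-Ub x) / Z))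
          = C ^ 2 * Z * (Real.exp (-a * ‖x - xstar‖ ^ 2) * Real.exp (Ub x)) := by
      intro x
      have h2 : -a * ‖x - xstar‖ ^ 2 / 2 + -a * ‖x - xstar‖ ^ 2 / 2
          = -a * ‖x - xstar‖ ^ 2 := by ring
      rw [mul_pow, sq (Real.exp _), ← Real.exp_add, h2, Real.exp_neg]
      rw [div_div_eq_mul_div, div_eq_mul_inv, inv_inv]
      ring
    -- pointwise bound
    have hbound : ∀ x : EuclideanSpace ℝ (Fin d),
        C ^ 2 * Z * (Real.exp (-a * ‖x - xstar‖ ^ 2) * Real.exp (Ub x))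
          ≤ C ^ 2 * Z * Real.exp (δ / 2) * Real.exp (-(a / 2) * ‖x - xstar‖ ^ 2) := by
      intro x
      have h1 : Real.exp (-a * ‖x - xstar‖ ^ 2) * Real.exp (Ub x)
          ≤ Real.exp (δ / 2) * Real.exp (-(a / 2) * ‖x - xstar‖ ^ 2) := by
        rw [← Real.exp_add, ← Real.exp_add]
        apply Real.exp_le_exp.2
        have := hup x; nlinarith
      have h2 : 0 ≤ C ^ 2 * Z := by positivity
      calc C ^ 2 * Z * (Real.exp (-a * ‖x - xstar‖ ^ 2) * Real.exp (Ub x))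
          ≤ C ^ 2 * Z * (Real.exp (δ / 2) * Real.exp (-(a / 2) * ‖x - xstar‖ ^ 2)) :=
            mul_le_mul_of_nonneg_left h1 h2
        _ = _ := by ring
    have hmain : (∫ x, ((C * Real.exp (-a * ‖x - xstar‖ ^ 2 / 2)) ^ 2
          / (Real.exp (-Ub x) / Z)))
        ≤ C ^ 2 * Z * Real.exp (δ / 2) * (π / (a / 2)) ^ ((d : ℝ) / 2) := by
      have hint : Integrable (fun x : EuclideanSpace ℝ (Fin d) =>
          C ^ 2 * Z * Real.exp (δ / 2) * Real.exp (-(a / 2) * ‖x - xstar‖ ^ 2)) :=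
        hga2.const_mul _
      calc (∫ x, ((C * Real.exp (-a * ‖x - xstar‖ ^ 2 / 2)) ^ 2 / (Real.exp (-Ub x) / Z)))
          ≤ ∫ x : EuclideanSpace ℝ (Fin d),
              C ^ 2 * Z * Real.exp (δ / 2) * Real.exp (-(a / 2) * ‖x - xstar‖ ^ 2) := by
            refine integral_mono_of_nonneg (Filter.Eventually.of_forall fun x => ?_) hint
              (Filter.Eventually.of_forall fun x => ?_)
            · simp only [Pi.zero_apply]; beta_reduce; rw [hpt x]; positivity
            · beta_reduce; rw [hpt x]; exact hbound x
        _ = C ^ 2 * Z * Real.exp (δ / 2) * (π / (a / 2)) ^ ((d : ℝ) / 2) := by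
            rw [integral_const_mul, gauss_integral _ ha2 xstar]
    -- final algebra
    have hfin : C ^ 2 * Z * Real.exp (δ / 2) * (π / (a / 2)) ^ ((d : ℝ) / 2)
        ≤ Real.exp (δ / 2) * (a / lam) ^ ((d : ℝ) / 2) := by
      have hstep : C ^ 2 * Z * Real.exp (δ / 2) * (π / (a / 2)) ^ ((d : ℝ) / 2)
          ≤ C ^ 2 * (2 * π / lam) ^ ((d : ℝ) / 2) * Real.exp (δ / 2)
            * (π / (a / 2)) ^ ((d : ℝ) / 2) := by
        have hnn : 0 ≤ C ^ 2 * Real.exp (δ / 2) * (π / (a / 2)) ^ ((d : ℝ) / 2) := by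
          positivity
        nlinarith [mul_le_mul_of_nonneg_left hZle hnn]
      refine hstep.trans_eq ?_
      have hpi : (0 : ℝ) < π := Real.pi_pos
      have e1 : π / (a / 2) = 2 * π / a := by
        rw [div_div_eq_mul_div]
        ring_nf
      rw [e1, hC_def,
        show ((a / (2 * π)) ^ ((d : ℝ) / 2)) ^ 2 * (2 * π / lam) ^ ((d : ℝ) / 2) *
            Real.exp (δ / 2) * (2 * π / a) ^ ((d : ℝ) / 2)
          = Real.exp (δ / 2) * (((a / (2 * π)) ^ ((d : ℝ) / 2)) ^ 2 *
              ((2 * π / lam) ^ ((d : ℝ) / 2) * (2 * π / a) ^ ((d : ℝ) / 2))) from by ring,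
        rpow_algebra ha hlam]
    exact le_trans (by exact_mod_cast hmain) hfin
  · -- non-measurable case: Z = 0 and the integral is 0
    have hZ0 : Z = 0 := by
      rw [hZ, integral_non_aestronglyMeasurable hmeas]
    have : (∫ x, (((M + m) / (2 * π)) ^ ((d : ℝ) / 2) *
        Real.exp (-(M + m) * ‖x - xstar‖ ^ 2 / 2)) ^ 2 / (Real.exp (-Ub x) / Z)) = 0 := by
      simp [hZ0]
    rw [this]
    exact hrhs
end
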